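/- For all (u₁, v₁), (u₂, v₂) ∈ ℂ², the squared modulus of the Hermitian inner product satisfies |u₁·conj(u₂) + v₁·conj(v₂)|² = ½·(⟨H(u₁, v₁), H(u₂, v₂)⟩ + ‖H(u₁, v₁)‖·‖H(u₂, v₂)‖), where ⟨·,·⟩ is the standard inner product on ℝ³. -/

import Mathlib

/-!
With `w = conj u * v`, the coordinates of `H(u, v)` are `(2 Re w, -2 Im w, |u|² - |v|²)`, and
expanding gives `⟨H p, H q⟩ = 2 |⟨p, q⟩|² - ‖p‖² ‖q‖²` for `p, q ∈ ℂ²`. Taking `q = p` yields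
`‖H p‖ = ‖p‖²`, and the two identities together give the claim.
-/

open Complex

noncomputable def hopfMap (u v : ℂ) : EuclideanSpace ℝ (Fin 3) :=
  (WithLp.equiv 2 (Fin 3 → ℝ)).symm
    ![2 * ((starRingEnd ℂ) u * v).re, -2 * ((starRingEnd ℂ) u * v).im,
      ‖u‖ ^ 2 - ‖v‖ ^ 2]

open ComplexConjugate

theorem inner_hopfMap (u₁ v₁ u₂ v₂ : ℂ) :
    inner ℝ (hopfMap u₁ v₁) (hopfMap u₂ v₂) =
      2 * ‖u₁ * conj u₂ + v₁ * conj v₂‖ ^ 2 - (‖u₁‖ ^ 2 + ‖v₁‖ ^ 2) * (‖u₂‖ ^ 2 + ‖v₂‖ ^ 2) := by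
  simp only [hopfMap, EuclideanSpace.inner_eq_star_dotProduct, dotProduct, Fin.sum_univ_three]
  simp [Complex.sq_norm, Complex.normSq_apply]
  ring

theorem norm_hopfMap (u v : ℂ) : ‖hopfMap u v‖ = ‖u‖ ^ 2 + ‖v‖ ^ 2 := by
  have h := inner_hopfMap u v u v
  rw [real_inner_self_eq_norm_sq, mul_conj', mul_conj', ← ofReal_pow, ← ofReal_pow,
    ← ofReal_add, norm_real, Real.norm_of_nonneg (by positivity)] at h
  exact (sq_eq_sq₀ (norm_nonneg _) (by positivity)).1 (by linarith)

theorem abs_sq_hermitian_inner_eq (u₁ v₁ u₂ v₂ : ℂ) :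
    ‖u₁ * (starRingEnd ℂ) u₂ + v₁ * (starRingEnd ℂ) v₂‖ ^ 2 =
      (1 / 2) * ((inner ℝ (hopfMap u₁ v₁) (hopfMap u₂ v₂) : ℝ)
        + ‖hopfMap u₁ v₁‖ * ‖hopfMap u₂ v₂‖) := by
  rw [inner_hopfMap, norm_hopfMap, norm_hopfMap]
  ring
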